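/- arXiv:2306.09605 — 7 statements merged into one kernel-verified Lean document; each statement's English description precedes it below -/
import Mathlib

section
/- Let χ be the unique primitive odd quadratic Dirichlet character modulo 8 with values in ℂ (the character attached to the field ℚ(√−2)). Then L(χ, −2) = −3. -/
open HurwitzZeta Complex ZMod Finset

noncomputable def myχ8 : DirichletCharacter ℂ 8 := (ZMod.χ₈').ringHomComp (Int.castRingHom ℂ)

lemma bernoulli_three_eq : Polynomial.bernoulli 3 =
    Polynomial.X ^ 3 - Polynomial.C (3/2) * Polynomial.X ^ 2 + Polynomial.C (1/2) * Polynomial.X := by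
  simp [Polynomial.bernoulli, Finset.sum_range_succ, bernoulli, bernoulli'_one, bernoulli'_two]
  norm_num [Polynomial.C_mul_X_pow_eq_monomial, Polynomial.C_mul_X_eq_monomial,
    ← Polynomial.monomial_one_right_eq_X_pow, sub_eq_add_neg]

lemma myχ8_LFunction : myχ8.LFunction (-2) = -3 := by
  rw [DirichletCharacter.LFunction, ZMod.LFunction]
  have hval : ∀ j : ZMod 8, (hurwitzZeta (toAddCircle j) (-2) : ℂ) =
      -1 / 3 * (((j.val / 8 : ℝ) : ℂ) ^ 3 - 3/2 * ((j.val / 8 : ℝ) : ℂ) ^ 2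
        + 1/2 * ((j.val / 8 : ℝ) : ℂ)) := by
    intro j
    rw [toAddCircle_apply]
    simp only [Nat.cast_ofNat]
    have h8 : (j.val : ℝ) ≤ 8 := by exact_mod_cast (ZMod.val_lt j).le
    have h2 : ((-2 : ℂ)) = -(2 : ℕ) := by norm_num
    rw [h2, hurwitzZeta_neg_nat two_ne_zero
      ⟨by positivity, div_le_one_of_le₀ h8 (by norm_num)⟩]
    rw [bernoulli_three_eq]
    push_cast
    simp
    norm_num
  simp only [hval]
  rw [show ∑ j : ZMod 8, (myχ8 j) * (-1 / 3 * (((j.val / 8 : ℝ) : ℂ) ^ 3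
      - 3/2 * ((j.val / 8 : ℝ) : ℂ) ^ 2 + 1/2 * ((j.val / 8 : ℝ) : ℂ))) =
      ∑ j : Fin 8, (myχ8 (j : ZMod 8)) * (-1 / 3 * ((((j : ZMod 8).val / 8 : ℝ) : ℂ) ^ 3
      - 3/2 * (((j : ZMod 8).val / 8 : ℝ) : ℂ) ^ 2 + 1/2 * (((j : ZMod 8).val / 8 : ℝ) : ℂ))) from rfl]
  have v : ∀ j : ZMod 8, myχ8 j = ((ZMod.χ₈' j : ℤ) : ℂ) := fun _ => rfl
  rw [show (-(-2:ℂ)) = ((2:ℕ):ℂ) by norm_num, cpow_natCast, Fin.sum_univ_eight]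
  norm_num [v,
    show ((ZMod.χ₈' ((0:Fin 8):ZMod 8)):ℤ) = 0 from by decide,
    show ((ZMod.χ₈' ((1:Fin 8):ZMod 8)):ℤ) = 1 from by decide,
    show ((ZMod.χ₈' ((2:Fin 8):ZMod 8)):ℤ) = 0 from by decide,
    show ((ZMod.χ₈' ((3:Fin 8):ZMod 8)):ℤ) = 1 from by decide,
    show ((ZMod.χ₈' ((4:Fin 8):ZMod 8)):ℤ) = 0 from by decide,
    show ((ZMod.χ₈' ((5:Fin 8):ZMod 8)):ℤ) = -1 from by decide,
    show ((ZMod.χ₈' ((6:Fin 8):ZMod 8)):ℤ) = 0 from by decide,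
    show ((ZMod.χ₈' ((7:Fin 8):ZMod 8)):ℤ) = -1 from by decide,
    show (((0:Fin 8):ZMod 8)).val = 0 from rfl,
    show (((1:Fin 8):ZMod 8)).val = 1 from rfl,
    show (((2:Fin 8):ZMod 8)).val = 2 from rfl,
    show (((3:Fin 8):ZMod 8)).val = 3 from rfl,
    show (((4:Fin 8):ZMod 8)).val = 4 from rfl,
    show (((5:Fin 8):ZMod 8)).val = 5 from rfl,
    show (((6:Fin 8):ZMod 8)).val = 6 from rfl,
    show (((7:Fin 8):ZMod 8)).val = 7 from rfl]
  rw [show myχ8 ((1:Fin 8):ZMod 8) = 1 from (v _).trans (by rw [show ((ZMod.χ₈' ((1:Fin 8):ZMod 8)):ℤ) = 1 from by decide]; simp),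
    show myχ8 ((2:Fin 8):ZMod 8) = 0 from (v _).trans (by rw [show ((ZMod.χ₈' ((2:Fin 8):ZMod 8)):ℤ) = 0 from by decide]; simp),
    show myχ8 ((3:Fin 8):ZMod 8) = 1 from (v _).trans (by rw [show ((ZMod.χ₈' ((3:Fin 8):ZMod 8)):ℤ) = 1 from by decide]; simp),
    show myχ8 ((5:Fin 8):ZMod 8) = -1 from (v _).trans (by rw [show ((ZMod.χ₈' ((5:Fin 8):ZMod 8)):ℤ) = -1 from by decide]; simp),
    show myχ8 ((6:Fin 8):ZMod 8) = 0 from (v _).trans (by rw [show ((ZMod.χ₈' ((6:Fin 8):ZMod 8)):ℤ) = 0 from by decide]; simp),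
    show myχ8 ((7:Fin 8):ZMod 8) = -1 from (v _).trans (by rw [show ((ZMod.χ₈' ((7:Fin 8):ZMod 8)):ℤ) = -1 from by decide]; simp)]
  norm_num

/-- The unique primitive odd quadratic Dirichlet character mod 8 (attached to `ℚ(√-2)`)
satisfies `L(χ, -2) = -3`. -/
theorem LFunction_neg_two_mod_eight (χ : DirichletCharacter ℂ 8)
    (hprim : χ.IsPrimitive) (hne : χ ≠ 1) (hquad : χ ^ 2 = 1) (hodd : χ.Odd) :
    χ.LFunction (-2) = -3 := by
  have h7 : χ 7 = -1 := by
    have := hodd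
    rwa [DirichletCharacter.Odd, show ((-1 : ZMod 8)) = 7 from rfl] at this
  have h3sq : χ 3 * χ 3 = 1 := by
    have := congrArg (fun ψ : DirichletCharacter ℂ 8 => ψ 3) hquad
    simpa [pow_two, MulChar.one_apply (show IsUnit (3 : ZMod 8) from by decide)] using this
  have h5 : χ 5 = -χ 3 := by
    have : χ (3 * 7) = χ 3 * χ 7 := map_mul χ 3 7
    rw [show ((3 * 7 : ZMod 8)) = 5 from by decide, h7] at this
    rw [this]; ring
  rcases mul_self_eq_one_iff.mp h3sq with h3 | h3
  · -- χ = myχ8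
    have hχ : χ = myχ8 := by
      apply MulChar.ext
      intro a
      have ha : (a : ZMod 8) = 1 ∨ (a : ZMod 8) = 3 ∨ (a : ZMod 8) = 5 ∨ (a : ZMod 8) = 7 := by
        revert a; decide
      have hv : ∀ b : ZMod 8, myχ8 b = ((ZMod.χ₈' b : ℤ) : ℂ) := fun _ => rfl
      rcases ha with h | h | h | h <;>
        rw [show (χ a : ℂ) = χ (a : ZMod 8) from rfl,
            show (myχ8 a : ℂ) = myχ8 (a : ZMod 8) from rfl, h, hv] <;>
        simp [h3, h5, h7,
          show ((ZMod.χ₈' (1:ZMod 8)):ℤ) = 1 from by decide,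
          show ((ZMod.χ₈' (3:ZMod 8)):ℤ) = 1 from by decide,
          show ((ZMod.χ₈' (5:ZMod 8)):ℤ) = -1 from by decide,
          show ((ZMod.χ₈' (7:ZMod 8)):ℤ) = -1 from by decide]
    rw [hχ, myχ8_LFunction]
  · -- χ factors through 4, contradicting primitivity
    exfalso
    have h5' : χ 5 = 1 := by rw [h5, h3]; ring
    set ψ : DirichletCharacter ℂ 4 := (ZMod.χ₄).ringHomComp (Int.castRingHom ℂ) with hψ
    have hft : χ.FactorsThrough 4 := by
      refine ⟨by norm_num, ψ, ?_⟩
      apply MulChar.ext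
      intro a
      have ha : (a : ZMod 8) = 1 ∨ (a : ZMod 8) = 3 ∨ (a : ZMod 8) = 5 ∨ (a : ZMod 8) = 7 := by
        revert a; decide
      rw [DirichletCharacter.changeLevel_eq_cast_of_dvd ψ (by norm_num : (4:ℕ) ∣ 8) a,
        show (χ a : ℂ) = χ (a : ZMod 8) from rfl]
      have hv : ∀ b : ZMod 4, ψ b = ((ZMod.χ₄ b : ℤ) : ℂ) := fun _ => rfl
      rcases ha with h | h | h | h <;> rw [h, hv] <;>
        simp [h3, h5', h7,
          show ((ZMod.χ₄ (ZMod.cast (1 : ZMod 8) : ZMod 4)):ℤ) = 1 from by decide,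
          show ((ZMod.χ₄ (ZMod.cast (3 : ZMod 8) : ZMod 4)):ℤ) = -1 from by decide,
          show ((ZMod.χ₄ (ZMod.cast (5 : ZMod 8) : ZMod 4)):ℤ) = 1 from by decide,
          show ((ZMod.χ₄ (ZMod.cast (7 : ZMod 8) : ZMod 4)):ℤ) = -1 from by decide]
    have hle : χ.conductor ≤ 4 := Nat.sInf_le hft
    rw [DirichletCharacter.IsPrimitive] at hprim
    omega
end

section
/- Let χ be the unique quadratic Dirichlet character modulo 7 with values in ℂ (the Legendre symbol character modulo 7, which is odd and primitive, attached to ℚ(√−7)). Then L(χ, −2) = −16/7. -/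
open HurwitzZeta in
private lemma hz_val_aux (j : ZMod 7) : hurwitzZeta (ZMod.toAddCircle j) (-2) =
    -1/3 * (((j.val:ℂ)/7)^3 - 3/2*((j.val:ℂ)/7)^2 + 1/2*((j.val:ℂ)/7)) := by
  rw [ZMod.toAddCircle_apply]
  have hx : ((j.val : ℝ) / ((7:ℕ):ℝ)) ∈ Set.Icc (0:ℝ) 1 := by
    constructor
    · positivity
    · rw [div_le_one (by norm_num)]
      exact_mod_cast (ZMod.val_lt j).le
  have h := hurwitzZeta_neg_nat (k := 2) (by norm_num) hx
  rw [show ((-2:ℂ)) = -(2:ℕ) by norm_num, h]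
  push_cast
  simp [Polynomial.bernoulli_def, Finset.sum_range_succ,
    bernoulli_eq_bernoulli'_of_ne_one, bernoulli'_two, bernoulli'_three]
  ring

/-- The unique quadratic Dirichlet character mod 7 satisfies `L(χ, -2) = -16 / 7`. -/
theorem LFunction_neg_two_mod_seven (χ : DirichletCharacter ℂ 7) (hne : χ ≠ 1) (hquad : χ ^ 2 = 1) :
    χ.LFunction (-2) = -16 / 7 := by
  -- Step 1: χ 3 = -1
  have h3 : χ 3 = -1 := by
    have hsq : χ 3 * χ 3 = 1 := by
      have h := DFunLike.congr_fun hquad (3 : ZMod 7)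
      rwa [pow_two, MulChar.mul_apply, MulChar.one_apply (show IsUnit (3 : ZMod 7) by decide)] at h
    rcases mul_self_eq_one_iff.mp hsq with h | h
    · exfalso; apply hne
      have key : ∀ k : ℕ, χ ((3 : ZMod 7) ^ k) = 1 := fun k ↦ by rw [map_pow, h, one_pow]
      refine MulChar.ext' fun a ↦ ?_
      fin_cases a
      · show χ 0 = (1 : DirichletCharacter ℂ 7) 0
        rw [MulChar.map_nonunit χ (show ¬IsUnit (0 : ZMod 7) by decide), MulChar.map_nonunit 1 (show ¬IsUnit (0 : ZMod 7) by decide)]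
      · show χ 1 = (1 : DirichletCharacter ℂ 7) 1
        rw [MulChar.one_apply (by decide)]; exact (by decide : ((3:ZMod 7))^6 = 1) ▸ key 6
      · show χ 2 = (1 : DirichletCharacter ℂ 7) 2
        rw [MulChar.one_apply (by decide)]; exact (by decide : ((3:ZMod 7))^2 = 2) ▸ key 2
      · show χ 3 = (1 : DirichletCharacter ℂ 7) 3
        rw [MulChar.one_apply (by decide)]; exact h
      · show χ 4 = (1 : DirichletCharacter ℂ 7) 4
        rw [MulChar.one_apply (by decide)]; exact (by decide : ((3:ZMod 7))^4 = 4) ▸ key 4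
      · show χ 5 = (1 : DirichletCharacter ℂ 7) 5
        rw [MulChar.one_apply (by decide)]; exact (by decide : ((3:ZMod 7))^5 = 5) ▸ key 5
      · show χ 6 = (1 : DirichletCharacter ℂ 7) 6
        rw [MulChar.one_apply (by decide)]; exact (by decide : ((3:ZMod 7))^3 = 6) ▸ key 3
    · exact h
  -- Step 2: all values of χ
  have key : ∀ k : ℕ, χ ((3 : ZMod 7) ^ k) = (-1) ^ k := fun k ↦ by rw [map_pow, h3]
  have h0 : χ 0 = 0 := MulChar.map_nonunit χ (by decide)
  have h1 : χ 1 = 1 := map_one χ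
  have h2 : χ 2 = 1 := by
    have := key 2; rwa [show ((3:ZMod 7))^2 = 2 by decide, neg_one_sq] at this
  have h4 : χ 4 = 1 := by
    have := key 4; rwa [show ((3:ZMod 7))^4 = 4 by decide, show ((-1:ℂ))^4 = 1 by norm_num] at this
  have h5 : χ 5 = -1 := by
    have := key 5; rwa [show ((3:ZMod 7))^5 = 5 by decide, show ((-1:ℂ))^5 = -1 by norm_num] at this
  have h6 : χ 6 = -1 := by
    have := key 3; rwa [show ((3:ZMod 7))^3 = 6 by decide, show ((-1:ℂ))^3 = -1 by norm_num] at this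
  -- Step 3: compute the L-value
  rw [DirichletCharacter.LFunction, ZMod.LFunction]
  simp only [hz_val_aux]
  rw [show (Finset.univ : Finset (ZMod 7)) = {0,1,2,3,4,5,6} by decide]
  rw [Finset.sum_insert (by decide), Finset.sum_insert (by decide), Finset.sum_insert (by decide),
    Finset.sum_insert (by decide), Finset.sum_insert (by decide), Finset.sum_insert (by decide),
    Finset.sum_singleton]
  rw [h0, h1, h2, h3, h4, h5, h6]
  rw [show ((0:ZMod 7)).val = 0 by decide, show ((1:ZMod 7)).val = 1 by decide,
    show ((2:ZMod 7)).val = 2 by decide, show ((3:ZMod 7)).val = 3 by decide,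
    show ((4:ZMod 7)).val = 4 by decide, show ((5:ZMod 7)).val = 5 by decide,
    show ((6:ZMod 7)).val = 6 by decide]
  rw [show (-(-2):ℂ) = (2:ℕ) by norm_num, Complex.cpow_natCast]
  push_cast
  norm_num
end

section
/- Let χ be the unique quadratic Dirichlet character modulo 11 with values in ℂ (the Legendre symbol character modulo 11, which is odd and primitive, attached to ℚ(√−11)). Then L(χ, −2) = −6. -/
open HurwitzZeta

/-- The unique quadratic Dirichlet character mod 11 satisfies `L(χ, -2) = -6`. -/
theorem LFunction_neg_two_mod_eleven (χ : DirichletCharacter ℂ 11) (hne : χ ≠ 1) (hquad : χ ^ 2 = 1) :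
    χ.LFunction (-2) = -6 := by
  -- Step 1: determine the values of χ
  have key : ∀ (k : ℕ) (v : ZMod 11), (2:ZMod 11)^k = v → χ v = χ 2 ^ k := by
    intro k v hv; rw [← hv, map_pow]
  have h2sq : χ 2 * χ 2 = 1 := by
    rw [← pow_two, ← MulChar.pow_apply' χ two_ne_zero, hquad,
      MulChar.one_apply (by decide : IsUnit (2 : ZMod 11))]
  have hgen : ∀ v : ZMod 11, IsUnit v → ∃ k, k < 10 ∧ (2:ZMod 11)^k = v := by decide
  have h2 : χ 2 = -1 := by
    rcases mul_self_eq_one_iff.mp h2sq with h | h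
    · exfalso
      apply hne
      apply MulChar.ext
      intro a
      obtain ⟨k, -, hk⟩ := hgen a a.isUnit
      rw [MulChar.one_apply_coe, key k a hk, h, one_pow]
    · exact h
  have v0 : χ 0 = 0 := χ.map_nonunit (by decide)
  have v1 : χ 1 = 1 := map_one χ
  have v3 : χ 3 = 1 := by rw [key 8 3 (by decide), h2]; norm_num
  have v4 : χ 4 = 1 := by rw [key 2 4 (by decide), h2]; norm_num
  have v5 : χ 5 = 1 := by rw [key 4 5 (by decide), h2]; norm_num
  have v6 : χ 6 = -1 := by rw [key 9 6 (by decide), h2]; norm_num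
  have v7 : χ 7 = -1 := by rw [key 7 7 (by decide), h2]; norm_num
  have v8 : χ 8 = -1 := by rw [key 3 8 (by decide), h2]; norm_num
  have v9 : χ 9 = 1 := by rw [key 6 9 (by decide), h2]; norm_num
  have v10 : χ 10 = -1 := by rw [key 5 10 (by decide), h2]; norm_num
  -- Step 2: Hurwitz zeta values
  have hb : ∀ z : ℂ, ((Polynomial.bernoulli 3).map (algebraMap ℚ ℂ)).eval z
      = z^3 - 3/2*z^2 + 1/2*z := by
    have b2 : _root_.bernoulli 2 = 1/6 := by norm_num [_root_.bernoulli, bernoulli'_two]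
    have b3 : _root_.bernoulli 3 = 0 := by norm_num [_root_.bernoulli, bernoulli'_three]
    intro z
    simp [Polynomial.bernoulli, Finset.sum_range_succ, b2, b3]
    ring
  have hz : ∀ x : ℝ, x ∈ Set.Icc (0:ℝ) 1 →
      hurwitzZeta ↑x (-2) = -1/3 * ((x:ℂ)^3 - 3/2*(x:ℂ)^2 + 1/2*(x:ℂ)) := by
    intro x hx
    have h := hurwitzZeta_neg_nat (k := 2) two_ne_zero hx
    rw [show ((-2:ℂ)) = -((2:ℕ):ℂ) by norm_num, h, hb]
    norm_num
  have hg : ∀ (n : ℕ), n < 11 →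
      hurwitzZeta (ZMod.toAddCircle ((n : ℕ) : ZMod 11)) (-2)
        = -1/3 * (((n:ℝ)/11:ℝ):ℂ)^3 + 1/2*(((n:ℝ)/11:ℝ):ℂ)^2 - 1/6*(((n:ℝ)/11:ℝ):ℂ) := by
    intro n hn
    rw [ZMod.toAddCircle_natCast, show ((n:ℝ)/((11:ℕ):ℝ)) = ((n:ℝ)/11) from by norm_num,
      hz ((n:ℝ)/11)
      (by constructor <;> [positivity; (rw [div_le_one (by norm_num)]; exact_mod_cast hn.le)])]
    ring
  -- Step 3: expand the L-function
  unfold DirichletCharacter.LFunction ZMod.LFunction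
  rw [show (Finset.univ : Finset (ZMod 11)) = {0,1,2,3,4,5,6,7,8,9,10} from by decide]
  rw [Finset.sum_insert (by decide), Finset.sum_insert (by decide),
    Finset.sum_insert (by decide), Finset.sum_insert (by decide),
    Finset.sum_insert (by decide), Finset.sum_insert (by decide),
    Finset.sum_insert (by decide), Finset.sum_insert (by decide),
    Finset.sum_insert (by decide), Finset.sum_insert (by decide),
    Finset.sum_singleton]
  rw [v0, v1, h2, v3, v4, v5, v6, v7, v8, v9, v10]
  rw [show (1:ZMod 11) = ((1:ℕ):ZMod 11) from by norm_cast,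
    show (2:ZMod 11) = ((2:ℕ):ZMod 11) from by norm_cast,
    show (3:ZMod 11) = ((3:ℕ):ZMod 11) from by norm_cast,
    show (4:ZMod 11) = ((4:ℕ):ZMod 11) from by norm_cast,
    show (5:ZMod 11) = ((5:ℕ):ZMod 11) from by norm_cast,
    show (6:ZMod 11) = ((6:ℕ):ZMod 11) from by norm_cast,
    show (7:ZMod 11) = ((7:ℕ):ZMod 11) from by norm_cast,
    show (8:ZMod 11) = ((8:ℕ):ZMod 11) from by norm_cast,
    show (9:ZMod 11) = ((9:ℕ):ZMod 11) from by norm_cast,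
    show (10:ZMod 11) = ((10:ℕ):ZMod 11) from by norm_cast]
  rw [hg 1 (by norm_num), hg 2 (by norm_num), hg 3 (by norm_num), hg 4 (by norm_num),
    hg 5 (by norm_num), hg 6 (by norm_num), hg 7 (by norm_num), hg 8 (by norm_num),
    hg 9 (by norm_num), hg 10 (by norm_num)]
  rw [neg_neg, show ((2:ℂ)) = ((2:ℕ):ℂ) from by norm_num, Complex.cpow_natCast]
  push_cast
  ring_nf
end

section
/- Let χ be the unique quadratic Dirichlet character modulo 23 with values in ℂ (the Legendre symbol character modulo 23, which is odd and primitive, attached to ℚ(√−23)). Then L(χ, −2) = −48. -/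
open HurwitzZeta in
/-- The unique quadratic Dirichlet character mod 23 satisfies `L(χ, -2) = -48`. -/
theorem LFunction_neg_two_mod_twentythree (χ : DirichletCharacter ℂ 23) (hne : χ ≠ 1) (hquad : χ ^ 2 = 1) :
    χ.LFunction (-2) = -48 := by
  -- χ(5) = -1
  have hm5 : χ 5 = -1 := by
    have hc2 : χ 5 ^ 2 = 1 := by
      have := congrArg (fun ψ : DirichletCharacter ℂ 23 => ψ 5) hquad
      simpa [MulChar.pow_apply',
        MulChar.one_apply (IsUnit.of_mul_eq_one (a := (5 : ZMod 23)) 14 (by decide))] using this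
    have hcc : χ 5 = 1 ∨ χ 5 = -1 := by
      have h : (χ 5 - 1) * (χ 5 + 1) = 0 := by linear_combination hc2
      rcases mul_eq_zero.mp h with h | h
      · exact Or.inl (sub_eq_zero.mp h)
      · exact Or.inr (eq_neg_of_add_eq_zero_left h)
    rcases hcc with h1 | h1
    · exfalso
      apply hne
      have hdl : ∀ x : ZMod 23, x ≠ 0 → ∃ k, k < 22 ∧ (5 : ZMod 23) ^ k = x := by decide
      apply MulChar.ext
      intro a
      haveI : Fact (1 < 23) := ⟨by norm_num⟩
      obtain ⟨k, -, hk⟩ := hdl a.val a.ne_zero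
      rw [MulChar.one_apply_coe, ← hk, map_pow, h1, one_pow]
    · exact h1
  -- values of χ
  have h0 : χ (0 : ZMod 23) = 0 := by
    exact χ.map_nonunit (by decide)
  have h1 : χ (1 : ZMod 23) = 1 := map_one χ
  have h2 : χ (2 : ZMod 23) = 1 := by
    rw [show (2 : ZMod 23) = 5 ^ 2 from by decide, map_pow, hm5]; norm_num
  have h3 : χ (3 : ZMod 23) = 1 := by
    rw [show (3 : ZMod 23) = 5 ^ 16 from by decide, map_pow, hm5]; norm_num
  have h4 : χ (4 : ZMod 23) = 1 := by
    rw [show (4 : ZMod 23) = 5 ^ 4 from by decide, map_pow, hm5]; norm_num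
  have h5 : χ (5 : ZMod 23) = -1 := hm5
  have h6 : χ (6 : ZMod 23) = 1 := by
    rw [show (6 : ZMod 23) = 5 ^ 18 from by decide, map_pow, hm5]; norm_num
  have h7 : χ (7 : ZMod 23) = -1 := by
    rw [show (7 : ZMod 23) = 5 ^ 19 from by decide, map_pow, hm5]; norm_num
  have h8 : χ (8 : ZMod 23) = 1 := by
    rw [show (8 : ZMod 23) = 5 ^ 6 from by decide, map_pow, hm5]; norm_num
  have h9 : χ (9 : ZMod 23) = 1 := by
    rw [show (9 : ZMod 23) = 5 ^ 10 from by decide, map_pow, hm5]; norm_num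
  have h10 : χ (10 : ZMod 23) = -1 := by
    rw [show (10 : ZMod 23) = 5 ^ 3 from by decide, map_pow, hm5]; norm_num
  have h11 : χ (11 : ZMod 23) = -1 := by
    rw [show (11 : ZMod 23) = 5 ^ 9 from by decide, map_pow, hm5]; norm_num
  have h12 : χ (12 : ZMod 23) = 1 := by
    rw [show (12 : ZMod 23) = 5 ^ 20 from by decide, map_pow, hm5]; norm_num
  have h13 : χ (13 : ZMod 23) = 1 := by
    rw [show (13 : ZMod 23) = 5 ^ 14 from by decide, map_pow, hm5]; norm_num
  have h14 : χ (14 : ZMod 23) = -1 := by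
    rw [show (14 : ZMod 23) = 5 ^ 21 from by decide, map_pow, hm5]; norm_num
  have h15 : χ (15 : ZMod 23) = -1 := by
    rw [show (15 : ZMod 23) = 5 ^ 17 from by decide, map_pow, hm5]; norm_num
  have h16 : χ (16 : ZMod 23) = 1 := by
    rw [show (16 : ZMod 23) = 5 ^ 8 from by decide, map_pow, hm5]; norm_num
  have h17 : χ (17 : ZMod 23) = -1 := by
    rw [show (17 : ZMod 23) = 5 ^ 7 from by decide, map_pow, hm5]; norm_num
  have h18 : χ (18 : ZMod 23) = 1 := by
    rw [show (18 : ZMod 23) = 5 ^ 12 from by decide, map_pow, hm5]; norm_num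
  have h19 : χ (19 : ZMod 23) = -1 := by
    rw [show (19 : ZMod 23) = 5 ^ 15 from by decide, map_pow, hm5]; norm_num
  have h20 : χ (20 : ZMod 23) = -1 := by
    rw [show (20 : ZMod 23) = 5 ^ 5 from by decide, map_pow, hm5]; norm_num
  have h21 : χ (21 : ZMod 23) = -1 := by
    rw [show (21 : ZMod 23) = 5 ^ 13 from by decide, map_pow, hm5]; norm_num
  have h22 : χ (22 : ZMod 23) = -1 := by
    rw [show (22 : ZMod 23) = 5 ^ 11 from by decide, map_pow, hm5]; norm_num
  -- Bernoulli polynomial evaluation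
  have hB : ∀ z : ℂ, ((Polynomial.bernoulli 3).map (algebraMap ℚ ℂ)).eval z
      = z ^ 3 - 3 / 2 * z ^ 2 + 1 / 2 * z := by
    intro z
    simp [Polynomial.bernoulli, Finset.sum_range_succ]
    norm_num [_root_.bernoulli, bernoulli'_two, bernoulli'_three]
    ring
  -- Hurwitz zeta values
  have key : ∀ j : ZMod 23, hurwitzZeta (ZMod.toAddCircle j) (-2)
      = -1 / 3 * ((((j.val : ℝ) / 23 : ℝ) : ℂ) ^ 3 - 3 / 2 * (((j.val : ℝ) / 23 : ℝ) : ℂ) ^ 2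
          + 1 / 2 * (((j.val : ℝ) / 23 : ℝ) : ℂ)) := by
    intro j
    have hx : ((j.val : ℝ) / 23 : ℝ) ∈ Set.Icc (0 : ℝ) 1 := by
      constructor
      · positivity
      · rw [div_le_one (by norm_num)]
        exact_mod_cast j.val_lt.le
    have h := hurwitzZeta_neg_nat (k := 2) (by norm_num) hx
    rw [ZMod.toAddCircle_apply, show ((23 : ℕ) : ℝ) = (23 : ℝ) by norm_num,
      show (-2 : ℂ) = -(2 : ℕ) by norm_num, h, show ((2 : ℕ) : ℂ) + 1 = 3 by norm_num,
      show (2 : ℕ) + 1 = 3 from rfl, hB]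
  -- unfold the L-function
  rw [DirichletCharacter.LFunction, ZMod.LFunction]
  simp only [key]
  -- convert the sum over `ZMod 23` to a sum over `range 23`
  have hsum : ∀ g : ZMod 23 → ℂ, ∑ j : ZMod 23, g j = ∑ i ∈ Finset.range 23, g ((i : ℕ) : ZMod 23) := by
    intro g
    rw [← Fin.sum_univ_eq_sum_range]
    exact Fintype.sum_equiv (Equiv.refl _) _ _ fun j => by
      congr 1
      exact (ZMod.natCast_rightInverse j).symm
  rw [hsum]
  simp only [Finset.sum_range_succ, Finset.sum_range_zero, ZMod.val_natCast]
  norm_num [h0, h1, h2, h3, h4, h5, h6, h7, h8, h9, h10, h11, h12, h13, h14, h15, h16, h17,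
    h18, h19, h20, h21, h22, Complex.cpow_natCast, show (2 : ℂ) = ((2 : ℕ) : ℂ) by norm_num]
end

section
/- Let χ be the unique quadratic Dirichlet character modulo 31 with values in ℂ (the Legendre symbol character modulo 31, which is odd and primitive, attached to ℚ(√−31)). Then L(χ, −2) = −96. -/
def genUnit31 : (ZMod 31)ˣ := ZMod.unitOfCoprime 3 (by norm_num)

theorem genUnit31_generates : ∀ u : (ZMod 31)ˣ, ∃ k : Fin 30, u = genUnit31 ^ (k : ℕ) := by
  decide

/-- The unique quadratic Dirichlet character mod 31 satisfies `L(χ, -2) = -96`. -/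
theorem LFunction_neg_two_mod_thirtyone (χ : DirichletCharacter ℂ 31) (hne : χ ≠ 1) (hquad : χ ^ 2 = 1) :
    χ.LFunction (-2) = -96 := by
  have hunit : ∀ v : ZMod 31, v ≠ 0 → IsUnit v := by decide
  have hone : ∀ v : ZMod 31, v ≠ 0 → χ (v * v) = 1 := by
    intro v hv
    calc χ (v * v) = (χ * χ) v := by rw [MulChar.mul_apply, map_mul]
    _ = (χ ^ 2) v := by rw [pow_two]
    _ = 1 := by rw [hquad, MulChar.one_apply (hunit v hv)]
  have h3 : χ 3 = -1 := by
    have hu3 : IsUnit (3 : ZMod 31) := hunit 3 (by decide)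
    have h2 : χ 3 * χ 3 = 1 := by
      have := congrArg (fun ψ : DirichletCharacter ℂ 31 => ψ 3) hquad
      simpa [pow_two, MulChar.one_apply hu3] using this
    rcases mul_self_eq_one_iff.mp h2 with h | h
    · exfalso
      apply hne
      apply MulChar.ext
      intro u
      obtain ⟨k, rfl⟩ := genUnit31_generates u
      rw [Units.val_pow_eq_pow_val, map_pow]
      have h3' : ((genUnit31 : (ZMod 31)ˣ) : ZMod 31) = 3 := rfl
      rw [h3', h, one_pow, MulChar.one_apply]
      exact (genUnit31 ^ (k : ℕ)).isUnit
    · exact h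
  have hnr : ∀ v : ZMod 31, v ≠ 0 → χ (3 * (v * v)) = -1 := by
    intro v hv
    rw [map_mul, h3, hone v hv, mul_one]
  have heval : ∀ z : ℂ, ((Polynomial.bernoulli 3).map (algebraMap ℚ ℂ)).eval z
      = z ^ 3 - 3 / 2 * z ^ 2 + 1 / 2 * z := by
    have hb2 : bernoulli 2 = 1 / 6 := by
      rw [bernoulli_eq_bernoulli'_of_ne_one (by norm_num), bernoulli'_two]
    have hb3 : bernoulli 3 = 0 := by
      rw [bernoulli_eq_bernoulli'_of_ne_one (by norm_num), bernoulli'_three]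
    intro z
    simp [Polynomial.bernoulli, Finset.sum_range_succ, hb2, hb3, Polynomial.eval_monomial]
    ring
  have hz : ∀ j : ZMod 31, HurwitzZeta.hurwitzZeta (ZMod.toAddCircle j) (-2) =
      -1 / 3 * (((j.val : ℂ) / 31) ^ 3 - 3 / 2 * ((j.val : ℂ) / 31) ^ 2
        + 1 / 2 * ((j.val : ℂ) / 31)) := by
    intro j
    have hx : ((j.val : ℝ) / 31) ∈ Set.Icc (0 : ℝ) 1 := by
      constructor
      · positivity
      · rw [div_le_one (by norm_num)]
        exact_mod_cast (ZMod.val_lt j).le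
    have h31 : ((31 : ℕ) : ℝ) = (31 : ℝ) := by norm_num
    rw [ZMod.toAddCircle_apply, h31, show (-2 : ℂ) = -((2 : ℕ) : ℂ) by norm_num,
      HurwitzZeta.hurwitzZeta_neg_nat (by norm_num) hx, heval]
    push_cast
    ring
  rw [DirichletCharacter.LFunction, ZMod.LFunction]
  norm_num
  rw [Finset.sum_congr rfl (fun j _ => by rw [hz j])]
  rw [Finset.sum_nbij' (i := fun (j : ZMod 31) => j.val) (j := fun (i : ℕ) => (i : ZMod 31))
    (g := fun i : ℕ => χ (i : ZMod 31) * (-1 / 3 * (((((i : ZMod 31)).val : ℂ) / 31) ^ 3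
      - 3 / 2 * ((((i : ZMod 31)).val : ℂ) / 31) ^ 2 + 1 / 2 * ((((i : ZMod 31)).val : ℂ) / 31))))
    (t := Finset.range 31)
    (hi := fun j _ => Finset.mem_range.mpr (ZMod.val_lt j))
    (hj := fun i _ => Finset.mem_univ _)
    (left_neg := fun j _ => ZMod.natCast_rightInverse j)
    (right_neg := fun i hi => ZMod.val_cast_of_lt (Finset.mem_range.mp hi))
    (h := fun j _ => by simp only [ZMod.natCast_rightInverse j])]
  · have e0 : χ 0 = 0 := χ.map_nonunit (by decide)
    have e1 : χ 1 = 1 := by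
      rw [show (1 : ZMod 31) = 1 * 1 by decide]; exact hone 1 (by decide)
    have e2 : χ 2 = 1 := by
      rw [show (2 : ZMod 31) = 8 * 8 by decide]; exact hone 8 (by decide)
    have e3 : χ 3 = -1 := h3
    have e4 : χ 4 = 1 := by
      rw [show (4 : ZMod 31) = 2 * 2 by decide]; exact hone 2 (by decide)
    have e5 : χ 5 = 1 := by
      rw [show (5 : ZMod 31) = 6 * 6 by decide]; exact hone 6 (by decide)
    have e6 : χ 6 = -1 := by
      rw [show (6 : ZMod 31) = 3 * (8 * 8) by decide]; exact hnr 8 (by decide)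
    have e7 : χ 7 = 1 := by
      rw [show (7 : ZMod 31) = 10 * 10 by decide]; exact hone 10 (by decide)
    have e8 : χ 8 = 1 := by
      rw [show (8 : ZMod 31) = 15 * 15 by decide]; exact hone 15 (by decide)
    have e9 : χ 9 = 1 := by
      rw [show (9 : ZMod 31) = 3 * 3 by decide]; exact hone 3 (by decide)
    have e10 : χ 10 = 1 := by
      rw [show (10 : ZMod 31) = 14 * 14 by decide]; exact hone 14 (by decide)
    have e11 : χ 11 = -1 := by
      rw [show (11 : ZMod 31) = 3 * (13 * 13) by decide]; exact hnr 13 (by decide)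
    have e12 : χ 12 = -1 := by
      rw [show (12 : ZMod 31) = 3 * (2 * 2) by decide]; exact hnr 2 (by decide)
    have e13 : χ 13 = -1 := by
      rw [show (13 : ZMod 31) = 3 * (5 * 5) by decide]; exact hnr 5 (by decide)
    have e14 : χ 14 = 1 := by
      rw [show (14 : ZMod 31) = 13 * 13 by decide]; exact hone 13 (by decide)
    have e15 : χ 15 = -1 := by
      rw [show (15 : ZMod 31) = 3 * (6 * 6) by decide]; exact hnr 6 (by decide)
    have e16 : χ 16 = 1 := by
      rw [show (16 : ZMod 31) = 4 * 4 by decide]; exact hone 4 (by decide)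
    have e17 : χ 17 = -1 := by
      rw [show (17 : ZMod 31) = 3 * (4 * 4) by decide]; exact hnr 4 (by decide)
    have e18 : χ 18 = 1 := by
      rw [show (18 : ZMod 31) = 7 * 7 by decide]; exact hone 7 (by decide)
    have e19 : χ 19 = 1 := by
      rw [show (19 : ZMod 31) = 9 * 9 by decide]; exact hone 9 (by decide)
    have e20 : χ 20 = 1 := by
      rw [show (20 : ZMod 31) = 12 * 12 by decide]; exact hone 12 (by decide)
    have e21 : χ 21 = -1 := by
      rw [show (21 : ZMod 31) = 3 * (10 * 10) by decide]; exact hnr 10 (by decide)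
    have e22 : χ 22 = -1 := by
      rw [show (22 : ZMod 31) = 3 * (11 * 11) by decide]; exact hnr 11 (by decide)
    have e23 : χ 23 = -1 := by
      rw [show (23 : ZMod 31) = 3 * (7 * 7) by decide]; exact hnr 7 (by decide)
    have e24 : χ 24 = -1 := by
      rw [show (24 : ZMod 31) = 3 * (15 * 15) by decide]; exact hnr 15 (by decide)
    have e25 : χ 25 = 1 := by
      rw [show (25 : ZMod 31) = 5 * 5 by decide]; exact hone 5 (by decide)
    have e26 : χ 26 = -1 := by
      rw [show (26 : ZMod 31) = 3 * (9 * 9) by decide]; exact hnr 9 (by decide)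
    have e27 : χ 27 = -1 := by
      rw [show (27 : ZMod 31) = 3 * (3 * 3) by decide]; exact hnr 3 (by decide)
    have e28 : χ 28 = 1 := by
      rw [show (28 : ZMod 31) = 11 * 11 by decide]; exact hone 11 (by decide)
    have e29 : χ 29 = -1 := by
      rw [show (29 : ZMod 31) = 3 * (12 * 12) by decide]; exact hnr 12 (by decide)
    have e30 : χ 30 = -1 := by
      rw [show (30 : ZMod 31) = 3 * (14 * 14) by decide]; exact hnr 14 (by decide)
    have v0 : (((0 : ZMod 31)).val : ℂ) = 0 := by norm_num [show ((0 : ZMod 31)).val = 0 from by decide]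
    have v1 : (((1 : ZMod 31)).val : ℂ) = 1 := by norm_num [show ((1 : ZMod 31)).val = 1 from by decide]
    have v2 : (((2 : ZMod 31)).val : ℂ) = 2 := by norm_num [show ((2 : ZMod 31)).val = 2 from by decide]
    have v3 : (((3 : ZMod 31)).val : ℂ) = 3 := by norm_num [show ((3 : ZMod 31)).val = 3 from by decide]
    have v4 : (((4 : ZMod 31)).val : ℂ) = 4 := by norm_num [show ((4 : ZMod 31)).val = 4 from by decide]
    have v5 : (((5 : ZMod 31)).val : ℂ) = 5 := by norm_num [show ((5 : ZMod 31)).val = 5 from by decide]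
    have v6 : (((6 : ZMod 31)).val : ℂ) = 6 := by norm_num [show ((6 : ZMod 31)).val = 6 from by decide]
    have v7 : (((7 : ZMod 31)).val : ℂ) = 7 := by norm_num [show ((7 : ZMod 31)).val = 7 from by decide]
    have v8 : (((8 : ZMod 31)).val : ℂ) = 8 := by norm_num [show ((8 : ZMod 31)).val = 8 from by decide]
    have v9 : (((9 : ZMod 31)).val : ℂ) = 9 := by norm_num [show ((9 : ZMod 31)).val = 9 from by decide]
    have v10 : (((10 : ZMod 31)).val : ℂ) = 10 := by norm_num [show ((10 : ZMod 31)).val = 10 from by decide]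
    have v11 : (((11 : ZMod 31)).val : ℂ) = 11 := by norm_num [show ((11 : ZMod 31)).val = 11 from by decide]
    have v12 : (((12 : ZMod 31)).val : ℂ) = 12 := by norm_num [show ((12 : ZMod 31)).val = 12 from by decide]
    have v13 : (((13 : ZMod 31)).val : ℂ) = 13 := by norm_num [show ((13 : ZMod 31)).val = 13 from by decide]
    have v14 : (((14 : ZMod 31)).val : ℂ) = 14 := by norm_num [show ((14 : ZMod 31)).val = 14 from by decide]
    have v15 : (((15 : ZMod 31)).val : ℂ) = 15 := by norm_num [show ((15 : ZMod 31)).val = 15 from by decide]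
    have v16 : (((16 : ZMod 31)).val : ℂ) = 16 := by norm_num [show ((16 : ZMod 31)).val = 16 from by decide]
    have v17 : (((17 : ZMod 31)).val : ℂ) = 17 := by norm_num [show ((17 : ZMod 31)).val = 17 from by decide]
    have v18 : (((18 : ZMod 31)).val : ℂ) = 18 := by norm_num [show ((18 : ZMod 31)).val = 18 from by decide]
    have v19 : (((19 : ZMod 31)).val : ℂ) = 19 := by norm_num [show ((19 : ZMod 31)).val = 19 from by decide]
    have v20 : (((20 : ZMod 31)).val : ℂ) = 20 := by norm_num [show ((20 : ZMod 31)).val = 20 from by decide]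
    have v21 : (((21 : ZMod 31)).val : ℂ) = 21 := by norm_num [show ((21 : ZMod 31)).val = 21 from by decide]
    have v22 : (((22 : ZMod 31)).val : ℂ) = 22 := by norm_num [show ((22 : ZMod 31)).val = 22 from by decide]
    have v23 : (((23 : ZMod 31)).val : ℂ) = 23 := by norm_num [show ((23 : ZMod 31)).val = 23 from by decide]
    have v24 : (((24 : ZMod 31)).val : ℂ) = 24 := by norm_num [show ((24 : ZMod 31)).val = 24 from by decide]
    have v25 : (((25 : ZMod 31)).val : ℂ) = 25 := by norm_num [show ((25 : ZMod 31)).val = 25 from by decide]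
    have v26 : (((26 : ZMod 31)).val : ℂ) = 26 := by norm_num [show ((26 : ZMod 31)).val = 26 from by decide]
    have v27 : (((27 : ZMod 31)).val : ℂ) = 27 := by norm_num [show ((27 : ZMod 31)).val = 27 from by decide]
    have v28 : (((28 : ZMod 31)).val : ℂ) = 28 := by norm_num [show ((28 : ZMod 31)).val = 28 from by decide]
    have v29 : (((29 : ZMod 31)).val : ℂ) = 29 := by norm_num [show ((29 : ZMod 31)).val = 29 from by decide]
    have v30 : (((30 : ZMod 31)).val : ℂ) = 30 := by norm_num [show ((30 : ZMod 31)).val = 30 from by decide]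
    simp only [Finset.sum_range_succ, Finset.sum_range_zero, Nat.cast_ofNat, Nat.cast_one,
      Nat.cast_zero]
    rw [e0, e1, e2, e3, e4, e5, e6, e7, e8, e9, e10, e11, e12, e13, e14, e15, e16, e17, e18, e19, e20, e21, e22, e23, e24, e25, e26, e27, e28, e29, e30]
    rw [v0, v1, v2, v3, v4, v5, v6, v7, v8, v9, v10, v11, v12, v13, v14, v15, v16, v17, v18, v19, v20, v21, v22, v23, v24, v25, v26, v27, v28, v29, v30]
    norm_num
end

section
/- Let χ be a Dirichlet character modulo 5 with values in ℂ of order 4 (a quartic character; both such characters are odd and primitive, and the other one is χ⁻¹ = χ³). Then L(χ, −2) · L(χ⁻¹, −2) = 4/5. -/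
open HurwitzZeta Complex

private lemma bern3_eval (z : ℂ) :
    ((Polynomial.bernoulli 3).map (algebraMap ℚ ℂ)).eval z
      = z ^ 3 - 3 / 2 * z ^ 2 + 1 / 2 * z := by
  simp [Polynomial.bernoulli, Finset.sum_range_succ, Polynomial.map_monomial,
    Polynomial.eval_monomial, bernoulli, bernoulli'_two, bernoulli'_three]
  ring

private lemma hz_val (j : ZMod 5) :
    hurwitzZeta (ZMod.toAddCircle j) (-2)
      = -1 / 3 * (((j.val : ℂ) / 5) ^ 3 - 3 / 2 * ((j.val : ℂ) / 5) ^ 2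
          + 1 / 2 * ((j.val : ℂ) / 5)) := by
  have hx : ((j.val : ℝ) / 5) ∈ Set.Icc (0 : ℝ) 1 := by
    constructor
    · positivity
    · rw [div_le_one (by norm_num)]
      exact_mod_cast (ZMod.val_lt j).le
  have h := hurwitzZeta_neg_nat (k := 2) two_ne_zero hx
  rw [ZMod.toAddCircle_apply, show (((5 : ℕ) : ℝ)) = 5 by norm_num,
    show (-2 : ℂ) = -(2 : ℕ) by norm_num, h, bern3_eval]
  push_cast
  norm_num

private lemma Lval (ψ : DirichletCharacter ℂ 5) :
    ψ.LFunction (-2) = -(6 * ψ 1 + 3 * ψ 2 - 3 * ψ 3 - 6 * ψ 4) / 15 := by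
  rw [DirichletCharacter.LFunction, ZMod.LFunction]
  rw [show ∑ j : ZMod 5, ψ j * hurwitzZeta (ZMod.toAddCircle j) (-2)
        = ψ (0 : ZMod 5) * hurwitzZeta (ZMod.toAddCircle (0 : ZMod 5)) (-2)
        + ψ (1 : ZMod 5) * hurwitzZeta (ZMod.toAddCircle (1 : ZMod 5)) (-2)
        + ψ (2 : ZMod 5) * hurwitzZeta (ZMod.toAddCircle (2 : ZMod 5)) (-2)
        + ψ (3 : ZMod 5) * hurwitzZeta (ZMod.toAddCircle (3 : ZMod 5)) (-2)
        + ψ (4 : ZMod 5) * hurwitzZeta (ZMod.toAddCircle (4 : ZMod 5)) (-2) from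
      (by exact Fin.sum_univ_five _)]
  rw [hz_val 0, hz_val 1, hz_val 2, hz_val 3, hz_val 4]
  rw [show ((0 : ZMod 5).val : ℂ) = 0 by rw [show (0 : ZMod 5).val = 0 from rfl]; norm_num,
    show ((1 : ZMod 5).val : ℂ) = 1 by rw [show (1 : ZMod 5).val = 1 from rfl]; norm_num,
    show ((2 : ZMod 5).val : ℂ) = 2 by rw [show (2 : ZMod 5).val = 2 from rfl]; norm_num,
    show ((3 : ZMod 5).val : ℂ) = 3 by rw [show (3 : ZMod 5).val = 3 from rfl]; norm_num,
    show ((4 : ZMod 5).val : ℂ) = 4 by rw [show (4 : ZMod 5).val = 4 from rfl]; norm_num]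
  rw [neg_neg, show ((5 : ℕ) : ℂ) ^ (2 : ℂ) = 25 by
    rw [show (2 : ℂ) = ((2 : ℕ) : ℂ) by norm_num, cpow_natCast]; norm_num]
  ring

/-- For a Dirichlet character `χ` mod 5 of order 4,
`L(χ, -2) · L(χ⁻¹, -2) = 4/5`. -/
theorem LFunction_neg_two_mod_five_quartic (χ : DirichletCharacter ℂ 5)
    (hord : orderOf χ = 4) :
    χ.LFunction (-2) * (χ⁻¹).LFunction (-2) = 4 / 5 := by
  set a : ℂ := χ 2 with ha
  have h16 : (2 : ZMod 5) ^ 4 = 1 := by decide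
  have ha4 : a ^ 4 = 1 := by rw [ha, ← map_pow, h16, map_one]
  have h3 : χ 3 = a ^ 3 := by
    rw [show (3 : ZMod 5) = 2 ^ 3 by decide, map_pow]
  have h4 : χ 4 = a ^ 2 := by
    rw [show (4 : ZMod 5) = 2 ^ 2 by decide, map_pow]
  have ha2 : a ^ 2 = -1 := by
    have hne : a ^ 2 ≠ 1 := by
      intro h
      have hsq : χ ^ 2 = 1 := by
        apply MulChar.ext
        intro u
        have hu : (u : ZMod 5) = 1 ∨ (u : ZMod 5) = 2 ∨ (u : ZMod 5) = 3 ∨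
            (u : ZMod 5) = 4 := by
          revert u; decide
        rw [MulChar.pow_apply_coe, MulChar.one_apply u.isUnit]
        rcases hu with h1 | h2 | h3' | h4'
        · rw [h1, map_one, one_pow]
        · rw [h2, ← ha, h]
        · rw [h3', h3, ← pow_mul]
          rw [show 3 * 2 = 2 * 3 by ring, pow_mul, h, one_pow]
        · rw [h4', h4, ← pow_mul, pow_mul, h, one_pow]
      have : orderOf χ ∣ 2 := orderOf_dvd_of_pow_eq_one hsq
      rw [hord] at this
      omega
    have hfact : (a ^ 2 - 1) * (a ^ 2 + 1) = 0 := by linear_combination ha4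
    rcases mul_eq_zero.mp hfact with h | h
    · exact absurd (sub_eq_zero.mp h) hne
    · exact eq_neg_of_add_eq_zero_left h
  have hpow : χ ^ 4 = 1 := by rw [← hord]; exact pow_orderOf_eq_one χ
  have hi1 : χ⁻¹ (1 : ZMod 5) = 1 := map_one _
  have hi2 : χ⁻¹ (2 : ZMod 5) = a ^ 3 := by
    rw [MulChar.inv_apply_eq_inv', ← ha]
    exact inv_eq_of_mul_eq_one_right (by linear_combination ha4)
  have hi3 : χ⁻¹ (3 : ZMod 5) = a := by
    rw [MulChar.inv_apply_eq_inv', h3]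
    exact inv_eq_of_mul_eq_one_right (by linear_combination ha4)
  have hi4 : χ⁻¹ (4 : ZMod 5) = a ^ 2 := by
    rw [MulChar.inv_apply_eq_inv', h4]
    exact inv_eq_of_mul_eq_one_right (by linear_combination ha4)
  rw [Lval χ, Lval χ⁻¹, map_one χ, hi1, hi2, hi3, hi4, h3, h4, ← ha]
  linear_combination ((-9 * a ^ 4 + 63 * a ^ 2 - 144) / 225) * ha2
end

section
/- Let χ₁ be the unique quadratic Dirichlet character modulo 11 with values in ℂ (odd, primitive, attached to ℚ(√−11)), and let χ₂ be the unique primitive quadratic Dirichlet character modulo 55 with values in ℂ (it is odd, attached to ℚ(√−55)). Then L(χ₁, −2) · L(χ₂, −2) = 2400. -/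
set_option maxRecDepth 20000 in
private lemma rep11' : ∀ v w : ZMod 11, v * w = 1 → ∃ k : Fin 10, v = 2^(k:ℕ) := by decide

set_option maxRecDepth 20000 in
private lemma rep55' : ∀ v w : ZMod 55, v * w = 1 →
    ∃ ε : Fin 2, ∃ k : Fin 20, v = (-1)^(ε:ℕ) * 2^(k:ℕ) := by decide

set_option maxRecDepth 20000 in
private lemma rep55_5 : ∀ v w : ZMod 55, v * w = 1 →
    (ZMod.castHom (by norm_num : (5:ℕ) ∣ 55) (ZMod 5)) v = 1 →
    ∃ ε : Fin 2, ∃ k : Fin 20, v = (-1)^(ε:ℕ) * 2^(k:ℕ) ∧ (k:ℕ) % 2 = 0 := by decide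

set_option maxRecDepth 20000 in
private lemma rep55_11 : ∀ v w : ZMod 55, v * w = 1 →
    (ZMod.castHom (by norm_num : (11:ℕ) ∣ 55) (ZMod 11)) v = 1 →
    ∃ ε : Fin 2, ∃ k : Fin 20, v = (-1)^(ε:ℕ) * 2^(k:ℕ) ∧ ((ε:ℕ) + (k:ℕ)) % 2 = 0 := by decide

private lemma bern2val : _root_.bernoulli 2 = 1/6 := by
  rw [show (2:ℕ) = 1+1 from rfl, bernoulli]
  norm_num [bernoulli'_two]

private lemma bern3val : _root_.bernoulli 3 = 0 := by
  rw [show (3:ℕ) = 1+1+1 from rfl, bernoulli]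
  norm_num [bernoulli'_three]

private lemma bern3 (x : ℂ) : ((Polynomial.bernoulli 3).map (algebraMap ℚ ℂ)).eval x
    = x^3 - 3/2*x^2 + 1/2*x := by
  simp [Polynomial.bernoulli, Finset.sum_range_succ, bernoulli_one, bern2val, bern3val]
  ring

private lemma LFun_neg_two {N : ℕ} [NeZero N] (χ : DirichletCharacter ℂ N) :
    χ.LFunction (-2) = (N:ℂ)^2 * ∑ j : ZMod N, χ j *
      (-1/3 * (((j.val:ℂ)/N)^3 - 3/2*((j.val:ℂ)/N)^2 + 1/2*((j.val:ℂ)/N))) := by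
  rw [DirichletCharacter.LFunction, ZMod.LFunction, neg_neg]
  rw [show ((N:ℂ)^(2:ℂ)) = (N:ℂ)^2 by
    rw [show (2:ℂ) = ((2:ℕ):ℂ) by norm_num, Complex.cpow_natCast]]
  congr 1
  refine Finset.sum_congr rfl fun j _ ↦ ?_
  have hN : (0:ℝ) < N := Nat.cast_pos.mpr (Nat.pos_of_ne_zero (NeZero.ne N))
  have hx : ((j.val : ℝ)/N) ∈ Set.Icc (0:ℝ) 1 := by
    constructor
    · positivity
    · rw [div_le_one hN]
      exact_mod_cast (ZMod.val_lt j).le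
  have := HurwitzZeta.hurwitzZeta_neg_nat (k := 2) two_ne_zero hx
  rw [ZMod.toAddCircle_apply, show (-2:ℂ) = -((2:ℕ):ℂ) by norm_num, this, bern3]
  push_cast
  norm_num

private lemma sum_zmod {N : ℕ} [NeZero N] (f : ℕ → ℂ) :
    ∑ j : ZMod N, f j.val = ∑ i ∈ Finset.range N, f i := by
  obtain ⟨M, rfl⟩ := Nat.exists_eq_succ_of_ne_zero (NeZero.ne N)
  exact Fin.sum_univ_eq_sum_range f _

private lemma LFun_neg_two' {N : ℕ} [NeZero N] (χ : DirichletCharacter ℂ N) :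
    χ.LFunction (-2) = (N:ℂ)^2 * ∑ i ∈ Finset.range N, χ (i : ZMod N) *
      (-1/3 * (((i:ℂ)/N)^3 - 3/2*((i:ℂ)/N)^2 + 1/2*((i:ℂ)/N))) := by
  rw [LFun_neg_two, ← sum_zmod (N := N) (fun i ↦ χ (i : ZMod N) *
      (-1/3 * (((i:ℂ)/N)^3 - 3/2*((i:ℂ)/N)^2 + 1/2*((i:ℂ)/N))))]
  congr 1
  refine Finset.sum_congr rfl fun j _ ↦ ?_
  simp [ZMod.natCast_val, ZMod.cast_id]

private lemma notUnit_of {N : ℕ} (v : ZMod N) (h : ∀ w, v * w ≠ 1) : ¬ IsUnit v := by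
  rintro ⟨u, rfl⟩
  exact h ↑u⁻¹ u.mul_inv

private lemma sq_vals {N : ℕ} (χ : DirichletCharacter ℂ N) (hq : χ ^ 2 = 1)
    {x : ZMod N} (hx : IsUnit x) : χ x = 1 ∨ χ x = -1 := by
  have h := MulChar.pow_apply' χ two_ne_zero x
  rw [hq, MulChar.one_apply hx, sq] at h
  exact mul_self_eq_one_iff.mp h.symm

/-- Let `χ₁` be the unique quadratic Dirichlet character mod 11 and `χ₂` the unique
primitive quadratic Dirichlet character mod 55.  Then `L(χ₁, -2) · L(χ₂, -2) = 2400`. -/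
theorem LFunction_product_mod_eleven_fiftyfive
    (χ₁ : DirichletCharacter ℂ 11) (h₁ne : χ₁ ≠ 1) (h₁quad : χ₁ ^ 2 = 1)
    (χ₂ : DirichletCharacter ℂ 55) (h₂prim : χ₂.IsPrimitive)
    (h₂ne : χ₂ ≠ 1) (h₂quad : χ₂ ^ 2 = 1) :
    χ₁.LFunction (-2) * χ₂.LFunction (-2) = 2400 := by
  -- χ₁ 2 = -1
  have hu2 : IsUnit (2 : ZMod 11) := IsUnit.of_mul_eq_one (a := 2) 6 (by decide)
  have ha1 : χ₁ 2 = -1 := by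
    rcases sq_vals χ₁ h₁quad hu2 with h | h
    · exfalso
      apply h₁ne
      refine MulChar.ext fun u ↦ ?_
      obtain ⟨k, hk⟩ := rep11' ↑u ↑(u⁻¹) (by exact_mod_cast u.mul_inv)
      rw [MulChar.one_apply_coe, hk, map_pow, h, one_pow]
    · exact h
  -- χ₂ 2 = 1 and χ₂ (-1) = -1
  have hu2' : IsUnit (2 : ZMod 55) := IsUnit.of_mul_eq_one (a := 2) 28 (by decide)
  have hum : IsUnit (-1 : ZMod 55) := IsUnit.of_mul_eq_one (a := -1) (-1) (by decide)
  have hprim : χ₂.conductor = 55 := h₂prim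
  have key : ∀ (d : ℕ) (hd : d ∣ 55), d < 55 →
      ((ZMod.unitsMap hd).ker ≤ χ₂.toUnitHom.ker) → False := by
    intro d hd hne hker
    have hft : χ₂.FactorsThrough d :=
      (DirichletCharacter.factorsThrough_iff_ker_unitsMap hd).mpr hker
    have : χ₂.conductor ≤ d := Nat.sInf_le hft
    omega
  have ha2 : χ₂ 2 = 1 := by
    rcases sq_vals χ₂ h₂quad hu2' with h | h
    · exact h
    exfalso
    rcases sq_vals χ₂ h₂quad hum with hm | hm
    · -- factors through 5
      refine key 5 (by norm_num) (by norm_num) fun u hu ↦ ?_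
      have hcast : (ZMod.castHom (by norm_num : (5:ℕ) ∣ 55) (ZMod 5)) ↑u = 1 := by
        rw [MonoidHom.mem_ker, ZMod.unitsMap_def] at hu
        simpa using congrArg Units.val hu
      obtain ⟨ε, k, hv, hk⟩ := rep55_5 ↑u ↑(u⁻¹) (by exact_mod_cast u.mul_inv) hcast
      rw [MonoidHom.mem_ker, Units.ext_iff, MulChar.coe_toUnitHom, hv, map_mul, map_pow,
        map_pow, h, hm, one_pow, one_mul, Units.val_one]
      exact Even.neg_one_pow (Nat.even_iff.mpr hk)
    · -- factors through 11
      refine key 11 (by norm_num) (by norm_num) fun u hu ↦ ?_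
      have hcast : (ZMod.castHom (by norm_num : (11:ℕ) ∣ 55) (ZMod 11)) ↑u = 1 := by
        rw [MonoidHom.mem_ker, ZMod.unitsMap_def] at hu
        simpa using congrArg Units.val hu
      obtain ⟨ε, k, hv, hk⟩ := rep55_11 ↑u ↑(u⁻¹) (by exact_mod_cast u.mul_inv) hcast
      rw [MonoidHom.mem_ker, Units.ext_iff, MulChar.coe_toUnitHom, hv, map_mul, map_pow,
        map_pow, h, hm, Units.val_one, ← pow_add]
      exact Even.neg_one_pow (Nat.even_iff.mpr hk)
  have hbm : χ₂ (-1) = -1 := by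
    rcases sq_vals χ₂ h₂quad hum with hm | hm
    · exfalso
      apply h₂ne
      refine MulChar.ext fun u ↦ ?_
      obtain ⟨ε, k, hv⟩ := rep55' ↑u ↑(u⁻¹) (by exact_mod_cast u.mul_inv)
      rw [MulChar.one_apply_coe, hv, map_mul, map_pow, map_pow, ha2, hm, one_pow, one_pow,
        one_mul]
    · exact hm

  have c1_0 : χ₁ ((0:ℕ) : ZMod 11) = 0 := by
    push_cast
    exact χ₁.map_nonunit (notUnit_of _ (by decide))
  have c1_1 : χ₁ ((1:ℕ) : ZMod 11) = 1 := by
    push_cast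
    rw [show (1:ZMod 11) = 2^0 by decide, map_pow, ha1]
    norm_num
  have c1_2 : χ₁ ((2:ℕ) : ZMod 11) = (-1) := by
    push_cast
    rw [show (2:ZMod 11) = 2^1 by decide, map_pow, ha1]
    norm_num
  have c1_3 : χ₁ ((3:ℕ) : ZMod 11) = 1 := by
    push_cast
    rw [show (3:ZMod 11) = 2^8 by decide, map_pow, ha1]
    norm_num
  have c1_4 : χ₁ ((4:ℕ) : ZMod 11) = 1 := by
    push_cast
    rw [show (4:ZMod 11) = 2^2 by decide, map_pow, ha1]
    norm_num
  have c1_5 : χ₁ ((5:ℕ) : ZMod 11) = 1 := by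
    push_cast
    rw [show (5:ZMod 11) = 2^4 by decide, map_pow, ha1]
    norm_num
  have c1_6 : χ₁ ((6:ℕ) : ZMod 11) = (-1) := by
    push_cast
    rw [show (6:ZMod 11) = 2^9 by decide, map_pow, ha1]
    norm_num
  have c1_7 : χ₁ ((7:ℕ) : ZMod 11) = (-1) := by
    push_cast
    rw [show (7:ZMod 11) = 2^7 by decide, map_pow, ha1]
    norm_num
  have c1_8 : χ₁ ((8:ℕ) : ZMod 11) = (-1) := by
    push_cast
    rw [show (8:ZMod 11) = 2^3 by decide, map_pow, ha1]
    norm_num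
  have c1_9 : χ₁ ((9:ℕ) : ZMod 11) = 1 := by
    push_cast
    rw [show (9:ZMod 11) = 2^6 by decide, map_pow, ha1]
    norm_num
  have c1_10 : χ₁ ((10:ℕ) : ZMod 11) = (-1) := by
    push_cast
    rw [show (10:ZMod 11) = 2^5 by decide, map_pow, ha1]
    norm_num
  have hL1 : χ₁.LFunction (-2) = -6 := by
    rw [LFun_neg_two' χ₁]
    rw [show Finset.range 11 = Finset.range (10+1) from rfl, Finset.sum_range_succ]
    rw [show Finset.range 10 = Finset.range (9+1) from rfl, Finset.sum_range_succ]
    rw [show Finset.range 9 = Finset.range (8+1) from rfl, Finset.sum_range_succ]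
    rw [show Finset.range 8 = Finset.range (7+1) from rfl, Finset.sum_range_succ]
    rw [show Finset.range 7 = Finset.range (6+1) from rfl, Finset.sum_range_succ]
    rw [show Finset.range 6 = Finset.range (5+1) from rfl, Finset.sum_range_succ]
    rw [show Finset.range 5 = Finset.range (4+1) from rfl, Finset.sum_range_succ]
    rw [show Finset.range 4 = Finset.range (3+1) from rfl, Finset.sum_range_succ]
    rw [show Finset.range 3 = Finset.range (2+1) from rfl, Finset.sum_range_succ]
    rw [show Finset.range 2 = Finset.range (1+1) from rfl, Finset.sum_range_succ]
    rw [show Finset.range 1 = Finset.range (0+1) from rfl, Finset.sum_range_succ]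
    rw [Finset.sum_range_zero]
    rw [c1_0, c1_1, c1_2, c1_3, c1_4, c1_5, c1_6, c1_7, c1_8, c1_9, c1_10]
    push_cast
    norm_num
  have c2_0 : χ₂ ((0:ℕ) : ZMod 55) = 0 := by
    push_cast
    exact χ₂.map_nonunit (notUnit_of _ (by decide))
  have c2_1 : χ₂ ((1:ℕ) : ZMod 55) = 1 := by
    push_cast
    rw [show (1:ZMod 55) = (-1)^0 * 2^0 by decide, map_mul, map_pow, map_pow, ha2, hbm]
    norm_num
  have c2_2 : χ₂ ((2:ℕ) : ZMod 55) = 1 := by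
    push_cast
    rw [show (2:ZMod 55) = (-1)^0 * 2^1 by decide, map_mul, map_pow, map_pow, ha2, hbm]
    norm_num
  have c2_3 : χ₂ ((3:ℕ) : ZMod 55) = (-1) := by
    push_cast
    rw [show (3:ZMod 55) = (-1)^1 * 2^13 by decide, map_mul, map_pow, map_pow, ha2, hbm]
    norm_num
  have c2_4 : χ₂ ((4:ℕ) : ZMod 55) = 1 := by
    push_cast
    rw [show (4:ZMod 55) = (-1)^0 * 2^2 by decide, map_mul, map_pow, map_pow, ha2, hbm]
    norm_num
  have c2_5 : χ₂ ((5:ℕ) : ZMod 55) = 0 := by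
    push_cast
    exact χ₂.map_nonunit (notUnit_of _ (by decide))
  have c2_6 : χ₂ ((6:ℕ) : ZMod 55) = (-1) := by
    push_cast
    rw [show (6:ZMod 55) = (-1)^1 * 2^14 by decide, map_mul, map_pow, map_pow, ha2, hbm]
    norm_num
  have c2_7 : χ₂ ((7:ℕ) : ZMod 55) = 1 := by
    push_cast
    rw [show (7:ZMod 55) = (-1)^0 * 2^17 by decide, map_mul, map_pow, map_pow, ha2, hbm]
    norm_num
  have c2_8 : χ₂ ((8:ℕ) : ZMod 55) = 1 := by
    push_cast
    rw [show (8:ZMod 55) = (-1)^0 * 2^3 by decide, map_mul, map_pow, map_pow, ha2, hbm]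
    norm_num
  have c2_9 : χ₂ ((9:ℕ) : ZMod 55) = 1 := by
    push_cast
    rw [show (9:ZMod 55) = (-1)^0 * 2^6 by decide, map_mul, map_pow, map_pow, ha2, hbm]
    norm_num
  have c2_10 : χ₂ ((10:ℕ) : ZMod 55) = 0 := by
    push_cast
    exact χ₂.map_nonunit (notUnit_of _ (by decide))
  have c2_11 : χ₂ ((11:ℕ) : ZMod 55) = 0 := by
    push_cast
    exact χ₂.map_nonunit (notUnit_of _ (by decide))
  have c2_12 : χ₂ ((12:ℕ) : ZMod 55) = (-1) := by
    push_cast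
    rw [show (12:ZMod 55) = (-1)^1 * 2^15 by decide, map_mul, map_pow, map_pow, ha2, hbm]
    norm_num
  have c2_13 : χ₂ ((13:ℕ) : ZMod 55) = 1 := by
    push_cast
    rw [show (13:ZMod 55) = (-1)^0 * 2^11 by decide, map_mul, map_pow, map_pow, ha2, hbm]
    norm_num
  have c2_14 : χ₂ ((14:ℕ) : ZMod 55) = 1 := by
    push_cast
    rw [show (14:ZMod 55) = (-1)^0 * 2^18 by decide, map_mul, map_pow, map_pow, ha2, hbm]
    norm_num
  have c2_15 : χ₂ ((15:ℕ) : ZMod 55) = 0 := by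
    push_cast
    exact χ₂.map_nonunit (notUnit_of _ (by decide))
  have c2_16 : χ₂ ((16:ℕ) : ZMod 55) = 1 := by
    push_cast
    rw [show (16:ZMod 55) = (-1)^0 * 2^4 by decide, map_mul, map_pow, map_pow, ha2, hbm]
    norm_num
  have c2_17 : χ₂ ((17:ℕ) : ZMod 55) = 1 := by
    push_cast
    rw [show (17:ZMod 55) = (-1)^0 * 2^9 by decide, map_mul, map_pow, map_pow, ha2, hbm]
    norm_num
  have c2_18 : χ₂ ((18:ℕ) : ZMod 55) = 1 := by
    push_cast
    rw [show (18:ZMod 55) = (-1)^0 * 2^7 by decide, map_mul, map_pow, map_pow, ha2, hbm]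
    norm_num
  have c2_19 : χ₂ ((19:ℕ) : ZMod 55) = (-1) := by
    push_cast
    rw [show (19:ZMod 55) = (-1)^1 * 2^8 by decide, map_mul, map_pow, map_pow, ha2, hbm]
    norm_num
  have c2_20 : χ₂ ((20:ℕ) : ZMod 55) = 0 := by
    push_cast
    exact χ₂.map_nonunit (notUnit_of _ (by decide))
  have c2_21 : χ₂ ((21:ℕ) : ZMod 55) = (-1) := by
    push_cast
    rw [show (21:ZMod 55) = (-1)^1 * 2^10 by decide, map_mul, map_pow, map_pow, ha2, hbm]
    norm_num
  have c2_22 : χ₂ ((22:ℕ) : ZMod 55) = 0 := by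
    push_cast
    exact χ₂.map_nonunit (notUnit_of _ (by decide))
  have c2_23 : χ₂ ((23:ℕ) : ZMod 55) = (-1) := by
    push_cast
    rw [show (23:ZMod 55) = (-1)^1 * 2^5 by decide, map_mul, map_pow, map_pow, ha2, hbm]
    norm_num
  have c2_24 : χ₂ ((24:ℕ) : ZMod 55) = (-1) := by
    push_cast
    rw [show (24:ZMod 55) = (-1)^1 * 2^16 by decide, map_mul, map_pow, map_pow, ha2, hbm]
    norm_num
  have c2_25 : χ₂ ((25:ℕ) : ZMod 55) = 0 := by
    push_cast
    exact χ₂.map_nonunit (notUnit_of _ (by decide))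
  have c2_26 : χ₂ ((26:ℕ) : ZMod 55) = 1 := by
    push_cast
    rw [show (26:ZMod 55) = (-1)^0 * 2^12 by decide, map_mul, map_pow, map_pow, ha2, hbm]
    norm_num
  have c2_27 : χ₂ ((27:ℕ) : ZMod 55) = (-1) := by
    push_cast
    rw [show (27:ZMod 55) = (-1)^1 * 2^19 by decide, map_mul, map_pow, map_pow, ha2, hbm]
    norm_num
  have c2_28 : χ₂ ((28:ℕ) : ZMod 55) = 1 := by
    push_cast
    rw [show (28:ZMod 55) = (-1)^0 * 2^19 by decide, map_mul, map_pow, map_pow, ha2, hbm]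
    norm_num
  have c2_29 : χ₂ ((29:ℕ) : ZMod 55) = (-1) := by
    push_cast
    rw [show (29:ZMod 55) = (-1)^1 * 2^12 by decide, map_mul, map_pow, map_pow, ha2, hbm]
    norm_num
  have c2_30 : χ₂ ((30:ℕ) : ZMod 55) = 0 := by
    push_cast
    exact χ₂.map_nonunit (notUnit_of _ (by decide))
  have c2_31 : χ₂ ((31:ℕ) : ZMod 55) = 1 := by
    push_cast
    rw [show (31:ZMod 55) = (-1)^0 * 2^16 by decide, map_mul, map_pow, map_pow, ha2, hbm]
    norm_num
  have c2_32 : χ₂ ((32:ℕ) : ZMod 55) = 1 := by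
    push_cast
    rw [show (32:ZMod 55) = (-1)^0 * 2^5 by decide, map_mul, map_pow, map_pow, ha2, hbm]
    norm_num
  have c2_33 : χ₂ ((33:ℕ) : ZMod 55) = 0 := by
    push_cast
    exact χ₂.map_nonunit (notUnit_of _ (by decide))
  have c2_34 : χ₂ ((34:ℕ) : ZMod 55) = 1 := by
    push_cast
    rw [show (34:ZMod 55) = (-1)^0 * 2^10 by decide, map_mul, map_pow, map_pow, ha2, hbm]
    norm_num
  have c2_35 : χ₂ ((35:ℕ) : ZMod 55) = 0 := by
    push_cast
    exact χ₂.map_nonunit (notUnit_of _ (by decide))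
  have c2_36 : χ₂ ((36:ℕ) : ZMod 55) = 1 := by
    push_cast
    rw [show (36:ZMod 55) = (-1)^0 * 2^8 by decide, map_mul, map_pow, map_pow, ha2, hbm]
    norm_num
  have c2_37 : χ₂ ((37:ℕ) : ZMod 55) = (-1) := by
    push_cast
    rw [show (37:ZMod 55) = (-1)^1 * 2^7 by decide, map_mul, map_pow, map_pow, ha2, hbm]
    norm_num
  have c2_38 : χ₂ ((38:ℕ) : ZMod 55) = (-1) := by
    push_cast
    rw [show (38:ZMod 55) = (-1)^1 * 2^9 by decide, map_mul, map_pow, map_pow, ha2, hbm]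
    norm_num
  have c2_39 : χ₂ ((39:ℕ) : ZMod 55) = (-1) := by
    push_cast
    rw [show (39:ZMod 55) = (-1)^1 * 2^4 by decide, map_mul, map_pow, map_pow, ha2, hbm]
    norm_num
  have c2_40 : χ₂ ((40:ℕ) : ZMod 55) = 0 := by
    push_cast
    exact χ₂.map_nonunit (notUnit_of _ (by decide))
  have c2_41 : χ₂ ((41:ℕ) : ZMod 55) = (-1) := by
    push_cast
    rw [show (41:ZMod 55) = (-1)^1 * 2^18 by decide, map_mul, map_pow, map_pow, ha2, hbm]
    norm_num
  have c2_42 : χ₂ ((42:ℕ) : ZMod 55) = (-1) := by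
    push_cast
    rw [show (42:ZMod 55) = (-1)^1 * 2^11 by decide, map_mul, map_pow, map_pow, ha2, hbm]
    norm_num
  have c2_43 : χ₂ ((43:ℕ) : ZMod 55) = 1 := by
    push_cast
    rw [show (43:ZMod 55) = (-1)^0 * 2^15 by decide, map_mul, map_pow, map_pow, ha2, hbm]
    norm_num
  have c2_44 : χ₂ ((44:ℕ) : ZMod 55) = 0 := by
    push_cast
    exact χ₂.map_nonunit (notUnit_of _ (by decide))
  have c2_45 : χ₂ ((45:ℕ) : ZMod 55) = 0 := by
    push_cast
    exact χ₂.map_nonunit (notUnit_of _ (by decide))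
  have c2_46 : χ₂ ((46:ℕ) : ZMod 55) = (-1) := by
    push_cast
    rw [show (46:ZMod 55) = (-1)^1 * 2^6 by decide, map_mul, map_pow, map_pow, ha2, hbm]
    norm_num
  have c2_47 : χ₂ ((47:ℕ) : ZMod 55) = (-1) := by
    push_cast
    rw [show (47:ZMod 55) = (-1)^1 * 2^3 by decide, map_mul, map_pow, map_pow, ha2, hbm]
    norm_num
  have c2_48 : χ₂ ((48:ℕ) : ZMod 55) = (-1) := by
    push_cast
    rw [show (48:ZMod 55) = (-1)^1 * 2^17 by decide, map_mul, map_pow, map_pow, ha2, hbm]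
    norm_num
  have c2_49 : χ₂ ((49:ℕ) : ZMod 55) = 1 := by
    push_cast
    rw [show (49:ZMod 55) = (-1)^0 * 2^14 by decide, map_mul, map_pow, map_pow, ha2, hbm]
    norm_num
  have c2_50 : χ₂ ((50:ℕ) : ZMod 55) = 0 := by
    push_cast
    exact χ₂.map_nonunit (notUnit_of _ (by decide))
  have c2_51 : χ₂ ((51:ℕ) : ZMod 55) = (-1) := by
    push_cast
    rw [show (51:ZMod 55) = (-1)^1 * 2^2 by decide, map_mul, map_pow, map_pow, ha2, hbm]
    norm_num
  have c2_52 : χ₂ ((52:ℕ) : ZMod 55) = 1 := by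
    push_cast
    rw [show (52:ZMod 55) = (-1)^0 * 2^13 by decide, map_mul, map_pow, map_pow, ha2, hbm]
    norm_num
  have c2_53 : χ₂ ((53:ℕ) : ZMod 55) = (-1) := by
    push_cast
    rw [show (53:ZMod 55) = (-1)^1 * 2^1 by decide, map_mul, map_pow, map_pow, ha2, hbm]
    norm_num
  have c2_54 : χ₂ ((54:ℕ) : ZMod 55) = (-1) := by
    push_cast
    rw [show (54:ZMod 55) = (-1)^1 * 2^0 by decide, map_mul, map_pow, map_pow, ha2, hbm]
    norm_num
  have hL2 : χ₂.LFunction (-2) = -400 := by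
    rw [LFun_neg_two' χ₂]
    rw [show Finset.range 55 = Finset.range (54+1) from rfl, Finset.sum_range_succ]
    rw [show Finset.range 54 = Finset.range (53+1) from rfl, Finset.sum_range_succ]
    rw [show Finset.range 53 = Finset.range (52+1) from rfl, Finset.sum_range_succ]
    rw [show Finset.range 52 = Finset.range (51+1) from rfl, Finset.sum_range_succ]
    rw [show Finset.range 51 = Finset.range (50+1) from rfl, Finset.sum_range_succ]
    rw [show Finset.range 50 = Finset.range (49+1) from rfl, Finset.sum_range_succ]
    rw [show Finset.range 49 = Finset.range (48+1) from rfl, Finset.sum_range_succ]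
    rw [show Finset.range 48 = Finset.range (47+1) from rfl, Finset.sum_range_succ]
    rw [show Finset.range 47 = Finset.range (46+1) from rfl, Finset.sum_range_succ]
    rw [show Finset.range 46 = Finset.range (45+1) from rfl, Finset.sum_range_succ]
    rw [show Finset.range 45 = Finset.range (44+1) from rfl, Finset.sum_range_succ]
    rw [show Finset.range 44 = Finset.range (43+1) from rfl, Finset.sum_range_succ]
    rw [show Finset.range 43 = Finset.range (42+1) from rfl, Finset.sum_range_succ]
    rw [show Finset.range 42 = Finset.range (41+1) from rfl, Finset.sum_range_succ]
    rw [show Finset.range 41 = Finset.range (40+1) from rfl, Finset.sum_range_succ]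
    rw [show Finset.range 40 = Finset.range (39+1) from rfl, Finset.sum_range_succ]
    rw [show Finset.range 39 = Finset.range (38+1) from rfl, Finset.sum_range_succ]
    rw [show Finset.range 38 = Finset.range (37+1) from rfl, Finset.sum_range_succ]
    rw [show Finset.range 37 = Finset.range (36+1) from rfl, Finset.sum_range_succ]
    rw [show Finset.range 36 = Finset.range (35+1) from rfl, Finset.sum_range_succ]
    rw [show Finset.range 35 = Finset.range (34+1) from rfl, Finset.sum_range_succ]
    rw [show Finset.range 34 = Finset.range (33+1) from rfl, Finset.sum_range_succ]
    rw [show Finset.range 33 = Finset.range (32+1) from rfl, Finset.sum_range_succ]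
    rw [show Finset.range 32 = Finset.range (31+1) from rfl, Finset.sum_range_succ]
    rw [show Finset.range 31 = Finset.range (30+1) from rfl, Finset.sum_range_succ]
    rw [show Finset.range 30 = Finset.range (29+1) from rfl, Finset.sum_range_succ]
    rw [show Finset.range 29 = Finset.range (28+1) from rfl, Finset.sum_range_succ]
    rw [show Finset.range 28 = Finset.range (27+1) from rfl, Finset.sum_range_succ]
    rw [show Finset.range 27 = Finset.range (26+1) from rfl, Finset.sum_range_succ]
    rw [show Finset.range 26 = Finset.range (25+1) from rfl, Finset.sum_range_succ]
    rw [show Finset.range 25 = Finset.range (24+1) from rfl, Finset.sum_range_succ]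
    rw [show Finset.range 24 = Finset.range (23+1) from rfl, Finset.sum_range_succ]
    rw [show Finset.range 23 = Finset.range (22+1) from rfl, Finset.sum_range_succ]
    rw [show Finset.range 22 = Finset.range (21+1) from rfl, Finset.sum_range_succ]
    rw [show Finset.range 21 = Finset.range (20+1) from rfl, Finset.sum_range_succ]
    rw [show Finset.range 20 = Finset.range (19+1) from rfl, Finset.sum_range_succ]
    rw [show Finset.range 19 = Finset.range (18+1) from rfl, Finset.sum_range_succ]
    rw [show Finset.range 18 = Finset.range (17+1) from rfl, Finset.sum_range_succ]
    rw [show Finset.range 17 = Finset.range (16+1) from rfl, Finset.sum_range_succ]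
    rw [show Finset.range 16 = Finset.range (15+1) from rfl, Finset.sum_range_succ]
    rw [show Finset.range 15 = Finset.range (14+1) from rfl, Finset.sum_range_succ]
    rw [show Finset.range 14 = Finset.range (13+1) from rfl, Finset.sum_range_succ]
    rw [show Finset.range 13 = Finset.range (12+1) from rfl, Finset.sum_range_succ]
    rw [show Finset.range 12 = Finset.range (11+1) from rfl, Finset.sum_range_succ]
    rw [show Finset.range 11 = Finset.range (10+1) from rfl, Finset.sum_range_succ]
    rw [show Finset.range 10 = Finset.range (9+1) from rfl, Finset.sum_range_succ]
    rw [show Finset.range 9 = Finset.range (8+1) from rfl, Finset.sum_range_succ]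
    rw [show Finset.range 8 = Finset.range (7+1) from rfl, Finset.sum_range_succ]
    rw [show Finset.range 7 = Finset.range (6+1) from rfl, Finset.sum_range_succ]
    rw [show Finset.range 6 = Finset.range (5+1) from rfl, Finset.sum_range_succ]
    rw [show Finset.range 5 = Finset.range (4+1) from rfl, Finset.sum_range_succ]
    rw [show Finset.range 4 = Finset.range (3+1) from rfl, Finset.sum_range_succ]
    rw [show Finset.range 3 = Finset.range (2+1) from rfl, Finset.sum_range_succ]
    rw [show Finset.range 2 = Finset.range (1+1) from rfl, Finset.sum_range_succ]
    rw [show Finset.range 1 = Finset.range (0+1) from rfl, Finset.sum_range_succ]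
    rw [Finset.sum_range_zero]
    rw [c2_0, c2_1, c2_2, c2_3, c2_4, c2_5, c2_6, c2_7, c2_8, c2_9, c2_10, c2_11, c2_12, c2_13, c2_14, c2_15, c2_16, c2_17, c2_18, c2_19, c2_20, c2_21, c2_22, c2_23, c2_24, c2_25, c2_26, c2_27, c2_28, c2_29, c2_30, c2_31, c2_32, c2_33, c2_34, c2_35, c2_36, c2_37, c2_38, c2_39, c2_40, c2_41, c2_42, c2_43, c2_44, c2_45, c2_46, c2_47, c2_48, c2_49, c2_50, c2_51, c2_52, c2_53, c2_54]
    push_cast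
    norm_num
  rw [hL1, hL2]
  norm_num
end
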